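/- arXiv:1910.12179 — 9 statements merged into one kernel-verified Lean document; each statement's English description precedes it below -/
import Mathlib

section
/- Suppose that for every λ ≥ 0 there is given a λ-regularized upper envelope φ^λ = (w^λ, b^λ), i.e., a feasible parameter minimizing J^λ over the set of feasible parameters. Then for every s ∈ S, V_{φ^λ}(s) → G* as λ → ∞ (limit along the filter atTop on λ ∈ ℝ). -/
/-!
Comparing with the feasible parameter `(0, G*)` gives `λ ‖w^λ‖² ≤ H*`, so `w^λ → 0` and, by
continuity and `f(0, ·) = 0`, `f(w^λ, s) → 0` for every `s`. For fixed weights the optimal bias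
is the smallest feasible one, `b^λ = maxᵢ (Gᵢ - f(w^λ, sᵢ))`: lowering a feasible bias lowers every
(nonnegative) residual. Hence `b^λ → maxᵢ Gᵢ = G*`.
-/

open Filter Topology Finset

theorem eq_sup'_of_forall_le_of_sum_sq_le {ι : Type*} {t : Finset ι} (ht : t.Nonempty)
    {a : ι → ℝ} {b : ℝ} (hb : ∀ i ∈ t, a i ≤ b)
    (hmin : ∀ b', (∀ i ∈ t, a i ≤ b') → ∑ i ∈ t, (b - a i) ^ 2 ≤ ∑ i ∈ t, (b' - a i) ^ 2) :
    b = t.sup' ht a := by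
  have hsup : t.sup' ht a ≤ b := sup'_le ht a hb
  refine le_antisymm (not_lt.mp fun hlt => ?_) hsup
  have hterm : ∀ i ∈ t, (t.sup' ht a - a i) ^ 2 < (b - a i) ^ 2 := fun i hi => by
    have := le_sup' a hi
    nlinarith
  exact (sum_lt_sum_of_nonempty ht hterm).not_ge (hmin _ fun i hi => le_sup' a hi)

theorem tendsto_zero_of_mul_norm_sq_le {E : Type*} [SeminormedAddCommGroup E] {w : ℝ → E}
    {C : ℝ} (h : ∀ᶠ t in atTop, t * ‖w t‖ ^ 2 ≤ C) : Tendsto w atTop (𝓝 0) := by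
  have hsq : Tendsto (fun t => ‖w t‖ ^ 2) atTop (𝓝 0) := by
    refine squeeze_zero' (Eventually.of_forall fun t => sq_nonneg _) ?_
      ((tendsto_const_nhds (x := C)).div_atTop tendsto_id)
    filter_upwards [h, eventually_gt_atTop 0] with t ht hpos
    rw [id, le_div_iff₀ hpos]
    linarith
  rw [tendsto_zero_iff_norm_tendsto_zero]
  simpa [Real.sqrt_sq (norm_nonneg _)] using hsq.sqrt

theorem stmt_0
    {W : Type*} [NormedAddCommGroup W] [NormedSpace ℝ W]
    {S : Type*}
    (f : W → S → ℝ)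
    (hf_cont : ∀ s : S, Continuous fun w => f w s)
    (hf_zero : ∀ s : S, f 0 s = 0)
    (m : ℕ) (hm : 0 < m)
    (s : Fin m → S) (G : Fin m → ℝ)
    (Gstar : ℝ)
    (hGstar : Gstar = Finset.univ.sup' ⟨⟨0, hm⟩, Finset.mem_univ _⟩ G)
    (φ : ℝ → W × ℝ)
    (hfeas : ∀ lam : ℝ, 0 ≤ lam → ∀ i : Fin m, G i ≤ f (φ lam).1 (s i) + (φ lam).2)
    (hmin : ∀ lam : ℝ, 0 ≤ lam → ∀ ψ : W × ℝ,
      (∀ i : Fin m, G i ≤ f ψ.1 (s i) + ψ.2) →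
      (∑ i, (f (φ lam).1 (s i) + (φ lam).2 - G i) ^ 2) + lam * ‖(φ lam).1‖ ^ 2 ≤
        (∑ i, (f ψ.1 (s i) + ψ.2 - G i) ^ 2) + lam * ‖ψ.1‖ ^ 2) :
    ∀ x : S,
      Filter.Tendsto (fun lam : ℝ => f (φ lam).1 x + (φ lam).2)
        Filter.atTop (nhds Gstar) := by
  have hne : (univ : Finset (Fin m)).Nonempty := ⟨⟨0, hm⟩, mem_univ _⟩
  have hreg : ∀ lam, 0 ≤ lam → lam * ‖(φ lam).1‖ ^ 2 ≤ ∑ i, (Gstar - G i) ^ 2 := by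
    intro lam hlam
    have h := hmin lam hlam (0, Gstar) fun i => by
      simpa [hf_zero, hGstar] using le_sup' G (mem_univ i)
    simp only [hf_zero, zero_add, norm_zero] at h
    nlinarith [sum_nonneg fun i (_ : i ∈ univ) => sq_nonneg (f (φ lam).1 (s i) + (φ lam).2 - G i)]
  have hw : Tendsto (fun lam => (φ lam).1) atTop (𝓝 0) :=
    tendsto_zero_of_mul_norm_sq_le ((eventually_ge_atTop 0).mono hreg)
  have hfw : ∀ y, Tendsto (fun lam => f (φ lam).1 y) atTop (𝓝 0) := fun y =>
    hf_zero y ▸ ((hf_cont y).tendsto 0).comp hw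
  have hbias : ∀ lam, 0 ≤ lam → (φ lam).2 = univ.sup' hne fun i => G i - f (φ lam).1 (s i) := by
    intro lam hlam
    refine eq_sup'_of_forall_le_of_sum_sq_le hne (fun i _ => by linarith [hfeas lam hlam i])
      fun b' hb' => ?_
    have h := hmin lam hlam ((φ lam).1, b') fun i => by linarith [hb' i (mem_univ i)]
    convert le_of_add_le_add_right h using 3 <;> ring
  have hb : Tendsto (fun lam => (φ lam).2) atTop (𝓝 Gstar) := by
    have := Tendsto.finset_sup'_nhds_apply hne fun i _ => (hfw (s i)).const_sub (G i)
    rw [hGstar]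
    refine (tendsto_congr' ?_).mpr (by simpa using this)
    filter_upwards [eventually_ge_atTop 0] with lam hlam using hbias lam hlam
  intro x
  simpa using (hfw x).add hb
end

section
/- Suppose that for every λ ≥ 0, φ^λ = (w^λ, b^λ) is a λ-regularized upper envelope. Then for every λ > 0 one has ‖w^λ‖² ≤ H*/λ, and consequently w^λ → 0 in W as λ → ∞. -/
open Filter Topology

lemma mul_norm_sq_le_sum_sq_of_le_zero_weight
    {W : Type*} [NormedAddCommGroup W] {S ι : Type*} [Fintype ι]
    (f : W → S → ℝ) (s : ι → S) (G : ι → ℝ) (hf_zero : ∀ i, f 0 (s i) = 0)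
    {w : W} {b c lam : ℝ}
    (hopt : ∑ i, (f w (s i) + b - G i) ^ 2 + lam * ‖w‖ ^ 2 ≤
      ∑ i, (f 0 (s i) + c - G i) ^ 2 + lam * ‖(0 : W)‖ ^ 2) :
    lam * ‖w‖ ^ 2 ≤ ∑ i, (c - G i) ^ 2 := by
  have hloss_nonneg : 0 ≤ ∑ i, (f w (s i) + b - G i) ^ 2 :=
    Finset.sum_nonneg fun i _ => sq_nonneg _
  simp only [hf_zero, zero_add, norm_zero] at hopt
  linarith

lemma tendsto_zero_of_norm_sq_le_div {E : Type*} [SeminormedAddCommGroup E]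
    {g : ℝ → E} {C : ℝ} (hg : ∀ lam : ℝ, 0 < lam → ‖g lam‖ ^ 2 ≤ C / lam) :
    Tendsto g atTop (𝓝 0) := by
  have hsq : Tendsto (fun lam => ‖g lam‖ ^ 2) atTop (𝓝 0) :=
    squeeze_zero' (Eventually.of_forall fun _ => sq_nonneg _)
      ((eventually_gt_atTop 0).mono hg) (tendsto_const_nhds.div_atTop tendsto_id)
  rw [tendsto_zero_iff_norm_tendsto_zero]
  simpa [Real.sqrt_sq (norm_nonneg _)] using hsq.sqrt

theorem stmt_2_general
    {W : Type*} [NormedAddCommGroup W]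
    {S : Type*}
    (f : W → S → ℝ)
    (hf_zero : ∀ s : S, f 0 s = 0)
    (m : ℕ) (hm : 0 < m)
    (s : Fin m → S) (G : Fin m → ℝ)
    (Gstar : ℝ)
    (hGstar : Gstar = Finset.univ.sup' ⟨⟨0, hm⟩, Finset.mem_univ _⟩ G)
    (Hstar : ℝ)
    (hHstar : Hstar = ∑ i, (Gstar - G i) ^ 2)
    (φ : ℝ → W × ℝ)
    (hmin : ∀ lam : ℝ, 0 ≤ lam → ∀ ψ : W × ℝ,
      (∀ i : Fin m, G i ≤ f ψ.1 (s i) + ψ.2) →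
      (∑ i, (f (φ lam).1 (s i) + (φ lam).2 - G i) ^ 2) + lam * ‖(φ lam).1‖ ^ 2 ≤
        (∑ i, (f ψ.1 (s i) + ψ.2 - G i) ^ 2) + lam * ‖ψ.1‖ ^ 2) :
    (∀ lam : ℝ, 0 < lam → ‖(φ lam).1‖ ^ 2 ≤ Hstar / lam)
    ∧ Filter.Tendsto (fun lam : ℝ => (φ lam).1) Filter.atTop (nhds 0) := by
  have hconst_feasible : ∀ i, G i ≤ f 0 (s i) + Gstar := fun i => by
    rw [hf_zero, zero_add, hGstar]
    exact Finset.le_sup' G (Finset.mem_univ i)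
  have hbound : ∀ lam : ℝ, 0 < lam → ‖(φ lam).1‖ ^ 2 ≤ Hstar / lam := fun lam hlam => by
    rw [le_div_iff₀' hlam, hHstar]
    exact mul_norm_sq_le_sum_sq_of_le_zero_weight f s G (fun i => hf_zero (s i))
      (hmin lam hlam.le (0, Gstar) hconst_feasible)
  exact ⟨hbound, tendsto_zero_of_norm_sq_le_div hbound⟩

theorem stmt_2
    {W : Type*} [NormedAddCommGroup W] [NormedSpace ℝ W]
    {S : Type*}
    (f : W → S → ℝ)
    (hf_cont : ∀ s : S, Continuous fun w => f w s)
    (hf_zero : ∀ s : S, f 0 s = 0)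
    (m : ℕ) (hm : 0 < m)
    (s : Fin m → S) (G : Fin m → ℝ)
    (Gstar : ℝ)
    (hGstar : Gstar = Finset.univ.sup' ⟨⟨0, hm⟩, Finset.mem_univ _⟩ G)
    (Hstar : ℝ)
    (hHstar : Hstar = ∑ i, (Gstar - G i) ^ 2)
    (φ : ℝ → W × ℝ)
    (hfeas : ∀ lam : ℝ, 0 ≤ lam → ∀ i : Fin m, G i ≤ f (φ lam).1 (s i) + (φ lam).2)
    (hmin : ∀ lam : ℝ, 0 ≤ lam → ∀ ψ : W × ℝ,
      (∀ i : Fin m, G i ≤ f ψ.1 (s i) + ψ.2) →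
      (∑ i, (f (φ lam).1 (s i) + (φ lam).2 - G i) ^ 2) + lam * ‖(φ lam).1‖ ^ 2 ≤
        (∑ i, (f ψ.1 (s i) + ψ.2 - G i) ^ 2) + lam * ‖ψ.1‖ ^ 2) :
    (∀ lam : ℝ, 0 < lam → ‖(φ lam).1‖ ^ 2 ≤ Hstar / lam)
    ∧ Filter.Tendsto (fun lam : ℝ => (φ lam).1) Filter.atTop (nhds 0) :=
  stmt_2_general f hf_zero m hm s G Gstar hGstar Hstar hHstar φ hmin
end

section
/- Suppose that for every λ ≥ 0, φ^λ = (w^λ, b^λ) is a λ-regularized upper envelope. Then for every λ ≥ 0 and every i = 1, …, m one has G_i ≤ V_{φ^λ}(s_i) ≤ G_i + √(H*). -/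
/-! The constant network `(0, G*)` is feasible and its loss is exactly `H*`, for every `λ`.
Hence the residuals `rᵢ = V_{φ^λ}(sᵢ) - Gᵢ` of the optimum satisfy `∑ rᵢ² ≤ H*`, and each
single residual is at most `√H*`. -/

theorem Finset.le_sqrt_of_sum_sq_le {ι : Type*} {t : Finset ι} {x : ι → ℝ} {H : ℝ} {i : ι}
    (hi : i ∈ t) (h : ∑ j ∈ t, x j ^ 2 ≤ H) : x i ≤ √H :=
  calc x i ≤ |x i| := le_abs_self _
    _ = √(x i ^ 2) := (Real.sqrt_sq_eq_abs _).symm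
    _ ≤ √H := Real.sqrt_le_sqrt ((single_le_sum (fun j _ => sq_nonneg (x j)) hi).trans h)

theorem stmt_3_general
    {W : Type*} [NormedAddCommGroup W]
    {S : Type*}
    (f : W → S → ℝ)
    (hf_zero : ∀ s : S, f 0 s = 0)
    (m : ℕ) (hm : 0 < m)
    (s : Fin m → S) (G : Fin m → ℝ)
    (Gstar : ℝ)
    (hGstar : Gstar = Finset.univ.sup' ⟨⟨0, hm⟩, Finset.mem_univ _⟩ G)
    (Hstar : ℝ)
    (hHstar : Hstar = ∑ i, (Gstar - G i) ^ 2)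
    (φ : ℝ → W × ℝ)
    (hfeas : ∀ lam : ℝ, 0 ≤ lam → ∀ i : Fin m, G i ≤ f (φ lam).1 (s i) + (φ lam).2)
    (hmin : ∀ lam : ℝ, 0 ≤ lam → ∀ ψ : W × ℝ,
      (∀ i : Fin m, G i ≤ f ψ.1 (s i) + ψ.2) →
      (∑ i, (f (φ lam).1 (s i) + (φ lam).2 - G i) ^ 2) + lam * ‖(φ lam).1‖ ^ 2 ≤
        (∑ i, (f ψ.1 (s i) + ψ.2 - G i) ^ 2) + lam * ‖ψ.1‖ ^ 2) :
    ∀ lam : ℝ, 0 ≤ lam → ∀ i : Fin m,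
      G i ≤ f (φ lam).1 (s i) + (φ lam).2
      ∧ f (φ lam).1 (s i) + (φ lam).2 ≤ G i + Real.sqrt Hstar := by
  intro lam hlam i
  have const_feasible : ∀ j, G j ≤ f 0 (s j) + Gstar := fun j => by
    rw [hf_zero, zero_add, hGstar]
    exact Finset.le_sup' G (Finset.mem_univ j)
  have loss_le_const := hmin lam hlam (0, Gstar) const_feasible
  simp only [hf_zero, zero_add, norm_zero, zero_pow two_ne_zero, mul_zero, add_zero] at loss_le_const
  have residuals_le : ∑ j, (f (φ lam).1 (s j) + (φ lam).2 - G j) ^ 2 ≤ Hstar := by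
    rw [hHstar]
    linarith [mul_nonneg hlam (sq_nonneg ‖(φ lam).1‖)]
  have residual_le := Finset.le_sqrt_of_sum_sq_le (Finset.mem_univ i) residuals_le
  exact ⟨hfeas lam hlam i, by linarith⟩

theorem stmt_3
    {W : Type*} [NormedAddCommGroup W] [NormedSpace ℝ W]
    {S : Type*}
    (f : W → S → ℝ)
    (hf_cont : ∀ s : S, Continuous fun w => f w s)
    (hf_zero : ∀ s : S, f 0 s = 0)
    (m : ℕ) (hm : 0 < m)
    (s : Fin m → S) (G : Fin m → ℝ)
    (Gstar : ℝ)
    (hGstar : Gstar = Finset.univ.sup' ⟨⟨0, hm⟩, Finset.mem_univ _⟩ G)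
    (Hstar : ℝ)
    (hHstar : Hstar = ∑ i, (Gstar - G i) ^ 2)
    (φ : ℝ → W × ℝ)
    (hfeas : ∀ lam : ℝ, 0 ≤ lam → ∀ i : Fin m, G i ≤ f (φ lam).1 (s i) + (φ lam).2)
    (hmin : ∀ lam : ℝ, 0 ≤ lam → ∀ ψ : W × ℝ,
      (∀ i : Fin m, G i ≤ f ψ.1 (s i) + ψ.2) →
      (∑ i, (f (φ lam).1 (s i) + (φ lam).2 - G i) ^ 2) + lam * ‖(φ lam).1‖ ^ 2 ≤
        (∑ i, (f ψ.1 (s i) + ψ.2 - G i) ^ 2) + lam * ‖ψ.1‖ ^ 2) :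
    ∀ lam : ℝ, 0 ≤ lam → ∀ i : Fin m,
      G i ≤ f (φ lam).1 (s i) + (φ lam).2
      ∧ f (φ lam).1 (s i) + (φ lam).2 ≤ G i + Real.sqrt Hstar :=
  stmt_3_general f hf_zero m hm s G Gstar hGstar Hstar hHstar φ hfeas hmin
end

section
/- Suppose that for every λ ≥ 0, φ^λ = (w^λ, b^λ) is a λ-regularized upper envelope. Then the biases are eventually bounded: there exist Λ ≥ 0 and M ≥ 0 such that |b^λ| ≤ M for all λ ≥ Λ. -/
/-!
Comparing with the feasible parameter `(0, G*)` gives `J^λ(φ^λ) ≤ H*`. Hence `λ‖w^λ‖² ≤ H*`, so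
`w^λ` is close to `0` for large `λ` and, by continuity, `f(w^λ, s_1)` is close to `f(0, s_1) = 0`.
The single residual bound `(f(w^λ, s_1) + b^λ - G_1)² ≤ H*` then bounds `b^λ`.
-/

open Finset

section RegularizedLoss

variable {W S : Type*} [NormedAddCommGroup W] {m : ℕ}

/-- The paper's `J^λ`. -/
def regLoss (f : W → S → ℝ) (s : Fin m → S) (G : Fin m → ℝ) (lam : ℝ) (ψ : W × ℝ) : ℝ :=
  ∑ i, (f ψ.1 (s i) + ψ.2 - G i) ^ 2 + lam * ‖ψ.1‖ ^ 2

variable {f : W → S → ℝ} {s : Fin m → S} {G : Fin m → ℝ} {lam : ℝ}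

lemma regLoss_zero_weight (hf_zero : ∀ x, f 0 x = 0) (c : ℝ) :
    regLoss f s G lam (0, c) = ∑ i, (c - G i) ^ 2 := by
  simp [regLoss, hf_zero]

lemma sq_residual_le_regLoss (hlam : 0 ≤ lam) (ψ : W × ℝ) (i : Fin m) :
    (f ψ.1 (s i) + ψ.2 - G i) ^ 2 ≤ regLoss f s G lam ψ := by
  have hsum : (f ψ.1 (s i) + ψ.2 - G i) ^ 2 ≤ ∑ j, (f ψ.1 (s j) + ψ.2 - G j) ^ 2 :=
    single_le_sum (f := fun j => (f ψ.1 (s j) + ψ.2 - G j) ^ 2) (fun _ _ => sq_nonneg _)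
      (mem_univ i)
  have hreg : 0 ≤ lam * ‖ψ.1‖ ^ 2 := by positivity
  unfold regLoss
  linarith

lemma mul_sq_norm_le_regLoss (ψ : W × ℝ) : lam * ‖ψ.1‖ ^ 2 ≤ regLoss f s G lam ψ :=
  le_add_of_nonneg_left (by positivity)

end RegularizedLoss

lemma lt_of_mul_sq_le_of_lt_mul_sq {x δ H lam : ℝ} (hx : 0 ≤ x) (hδ : 0 ≤ δ) (hlam : 0 ≤ lam)
    (hH : H < lam * δ ^ 2) (h : lam * x ^ 2 ≤ H) : x < δ :=
  (pow_lt_pow_iff_left₀ hx hδ two_ne_zero).mp (lt_of_mul_lt_mul_left (h.trans_lt hH) hlam)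

lemma abs_le_of_sq_add_sub_le {a b g H : ℝ} (h : (a + b - g) ^ 2 ≤ H) (ha : |a| ≤ 1) :
    |b| ≤ √H + 1 + |g| := by
  have hres : |a + b - g| ≤ √H := Real.abs_le_sqrt h
  calc |b| = |(a + b - g) - a + g| := by ring_nf
    _ ≤ |a + b - g| + |a| + |g| := (abs_add_le _ _).trans (by gcongr; exact abs_sub _ _)
    _ ≤ √H + 1 + |g| := by gcongr

theorem stmt_4_general
    {W : Type*} [NormedAddCommGroup W]
    {S : Type*}
    (f : W → S → ℝ)
    (hf_cont : ∀ s : S, Continuous fun w => f w s)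
    (hf_zero : ∀ s : S, f 0 s = 0)
    (m : ℕ) (hm : 0 < m)
    (s : Fin m → S) (G : Fin m → ℝ)
    (Gstar : ℝ)
    (hGstar : Gstar = Finset.univ.sup' ⟨⟨0, hm⟩, Finset.mem_univ _⟩ G)
    (Hstar : ℝ)
    (hHstar : Hstar = ∑ i, (Gstar - G i) ^ 2)
    (φ : ℝ → W × ℝ)
    (hmin : ∀ lam : ℝ, 0 ≤ lam → ∀ ψ : W × ℝ,
      (∀ i : Fin m, G i ≤ f ψ.1 (s i) + ψ.2) →
      (∑ i, (f (φ lam).1 (s i) + (φ lam).2 - G i) ^ 2) + lam * ‖(φ lam).1‖ ^ 2 ≤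
        (∑ i, (f ψ.1 (s i) + ψ.2 - G i) ^ 2) + lam * ‖ψ.1‖ ^ 2) :
    ∃ Λ : ℝ, 0 ≤ Λ ∧ ∃ M : ℝ, 0 ≤ M ∧ ∀ lam : ℝ, Λ ≤ lam → |(φ lam).2| ≤ M := by
  set i₀ : Fin m := ⟨0, hm⟩
  have hHstar_nonneg : 0 ≤ Hstar := hHstar ▸ by positivity
  have hloss (lam : ℝ) (hlam : 0 ≤ lam) : regLoss f s G lam (φ lam) ≤ Hstar := by
    have hcmp : regLoss f s G lam (φ lam) ≤ regLoss f s G lam (0, Gstar) :=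
      hmin lam hlam (0, Gstar) fun i => by
        simpa [hf_zero, hGstar] using le_sup' G (mem_univ i)
    rwa [regLoss_zero_weight hf_zero, ← hHstar] at hcmp
  obtain ⟨δ, hδ, hsmall⟩ := Metric.continuousAt_iff.mp ((hf_cont (s i₀)).continuousAt (x := 0)) 1 one_pos
  have hΛ : 0 ≤ Hstar / δ ^ 2 + 1 := by positivity
  refine ⟨Hstar / δ ^ 2 + 1, hΛ, √Hstar + 1 + |G i₀|, by positivity, fun lam hlam => ?_⟩
  have hlam : 0 ≤ lam := hΛ.trans hlam
  have hHlt : Hstar < lam * δ ^ 2 := (div_lt_iff₀ (by positivity)).mp (by linarith)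
  have hw : ‖(φ lam).1‖ < δ := lt_of_mul_sq_le_of_lt_mul_sq (norm_nonneg _) hδ.le hlam hHlt
    ((mul_sq_norm_le_regLoss _).trans (hloss lam hlam))
  have hf_small : |f (φ lam).1 (s i₀)| ≤ 1 := by
    simpa [Real.dist_eq, hf_zero] using (hsmall (by rwa [dist_zero_right])).le
  exact abs_le_of_sq_add_sub_le ((sq_residual_le_regLoss hlam _ i₀).trans (hloss lam hlam))
    hf_small

theorem stmt_4
    {W : Type*} [NormedAddCommGroup W] [NormedSpace ℝ W]
    {S : Type*}
    (f : W → S → ℝ)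
    (hf_cont : ∀ s : S, Continuous fun w => f w s)
    (hf_zero : ∀ s : S, f 0 s = 0)
    (m : ℕ) (hm : 0 < m)
    (s : Fin m → S) (G : Fin m → ℝ)
    (Gstar : ℝ)
    (hGstar : Gstar = Finset.univ.sup' ⟨⟨0, hm⟩, Finset.mem_univ _⟩ G)
    (Hstar : ℝ)
    (hHstar : Hstar = ∑ i, (Gstar - G i) ^ 2)
    (φ : ℝ → W × ℝ)
    (hfeas : ∀ lam : ℝ, 0 ≤ lam → ∀ i : Fin m, G i ≤ f (φ lam).1 (s i) + (φ lam).2)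
    (hmin : ∀ lam : ℝ, 0 ≤ lam → ∀ ψ : W × ℝ,
      (∀ i : Fin m, G i ≤ f ψ.1 (s i) + ψ.2) →
      (∑ i, (f (φ lam).1 (s i) + (φ lam).2 - G i) ^ 2) + lam * ‖(φ lam).1‖ ^ 2 ≤
        (∑ i, (f ψ.1 (s i) + ψ.2 - G i) ^ 2) + lam * ‖ψ.1‖ ^ 2) :
    ∃ Λ : ℝ, 0 ≤ Λ ∧ ∃ M : ℝ, 0 ≤ M ∧ ∀ lam : ℝ, Λ ≤ lam → |(φ lam).2| ≤ M :=
  stmt_4_general f hf_cont hf_zero m hm s G Gstar hGstar Hstar hHstar φ hmin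
end

section
/- Suppose that for every λ ≥ 0, φ^λ = (w^λ, b^λ) is a λ-regularized upper envelope. Then liminf_{λ→∞} b^λ ≥ G*. -/
/-!
Comparing `φ^λ` with the feasible parameter `(0, G*)` bounds its loss by `H*`, so
`λ ‖w^λ‖² ≤ H*` and `w^λ → 0`. At an index `i₀` with `G i₀ = G*`, feasibility gives
`b^λ ≥ G* - f(w^λ, s i₀)`, whose right side tends to `G*`; the loss bound also gives
`b^λ ≤ G* - f(w^λ, s i₀) + √H*`, which keeps the `liminf` in `ℝ` meaningful.
-/

open Filter Topology

namespace UpperEnvelope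

variable {W S ι : Type*} [Fintype ι]
  (f : W → S → ℝ) (s : ι → S) (G : ι → ℝ)

def sqLoss (ψ : W × ℝ) : ℝ := ∑ i, (f ψ.1 (s i) + ψ.2 - G i) ^ 2

def Feasible (ψ : W × ℝ) : Prop := ∀ i, G i ≤ f ψ.1 (s i) + ψ.2

lemma sqLoss_nonneg (ψ : W × ℝ) : 0 ≤ sqLoss f s G ψ :=
  Finset.sum_nonneg fun _ _ => sq_nonneg _

lemma residual_le_sqrt_sqLoss (ψ : W × ℝ) (i : ι) :
    f ψ.1 (s i) + ψ.2 - G i ≤ √(sqLoss f s G ψ) :=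
  (le_abs_self _).trans <| Real.abs_le_sqrt <|
    Finset.single_le_sum (f := fun i => (f ψ.1 (s i) + ψ.2 - G i) ^ 2)
      (fun _ _ => sq_nonneg _) (Finset.mem_univ i)

variable {f s G} in
lemma sqLoss_add_mul_sq_norm_le [NormedAddCommGroup W] {φ : W × ℝ} {lam c : ℝ}
    (hmin : ∀ ψ, Feasible f s G ψ →
      sqLoss f s G φ + lam * ‖φ.1‖ ^ 2 ≤ sqLoss f s G ψ + lam * ‖ψ.1‖ ^ 2)
    (h0 : Feasible f s G ((0 : W), c)) :
    sqLoss f s G φ + lam * ‖φ.1‖ ^ 2 ≤ sqLoss f s G ((0 : W), c) := by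
  simpa using hmin _ h0

end UpperEnvelope

lemma tendsto_zero_of_mul_sq_norm_le {E : Type*} [SeminormedAddCommGroup E]
    {w : ℝ → E} {H : ℝ} (hw : ∀ᶠ lam in atTop, lam * ‖w lam‖ ^ 2 ≤ H) :
    Tendsto w atTop (𝓝 0) := by
  have hsqrt : Tendsto (fun lam : ℝ => √(H / lam)) atTop (𝓝 0) := by
    simpa using (tendsto_const_nhds.div_atTop tendsto_id).sqrt
  refine squeeze_zero_norm' ?_ hsqrt
  filter_upwards [hw, eventually_gt_atTop 0] with lam hlam hpos
  rw [← abs_norm]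
  exact Real.abs_le_sqrt <| (le_div_iff₀' hpos).2 hlam

lemma Filter.le_liminf_of_tendsto_of_le_of_le_add {α : Type*} {l : Filter α} [l.NeBot]
    {g b : α → ℝ} {a C : ℝ} (hg : Tendsto g l (𝓝 a))
    (hgb : ∀ᶠ x in l, g x ≤ b x) (hbg : ∀ᶠ x in l, b x ≤ g x + C) :
    a ≤ liminf b l := by
  have hb : IsBoundedUnder (· ≤ ·) l b := by
    obtain ⟨M, hM⟩ := hg.isBoundedUnder_le
    refine ⟨M + C, eventually_map.2 ?_⟩
    filter_upwards [eventually_map.1 hM, hbg] with x hx hx'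
    linarith
  calc a = liminf g l := hg.liminf_eq.symm
    _ ≤ liminf b l := liminf_le_liminf hgb hg.isBoundedUnder_ge hb.isCoboundedUnder_ge

open UpperEnvelope in
theorem stmt_5_general
    {W : Type*} [NormedAddCommGroup W]
    {S : Type*}
    (f : W → S → ℝ)
    (hf_cont : ∀ s : S, Continuous fun w => f w s)
    (hf_zero : ∀ s : S, f 0 s = 0)
    (m : ℕ) (hm : 0 < m)
    (s : Fin m → S) (G : Fin m → ℝ)
    (Gstar : ℝ)
    (hGstar : Gstar = Finset.univ.sup' ⟨⟨0, hm⟩, Finset.mem_univ _⟩ G)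
    (φ : ℝ → W × ℝ)
    (hfeas : ∀ lam : ℝ, 0 ≤ lam → ∀ i : Fin m, G i ≤ f (φ lam).1 (s i) + (φ lam).2)
    (hmin : ∀ lam : ℝ, 0 ≤ lam → ∀ ψ : W × ℝ,
      (∀ i : Fin m, G i ≤ f ψ.1 (s i) + ψ.2) →
      (∑ i, (f (φ lam).1 (s i) + (φ lam).2 - G i) ^ 2) + lam * ‖(φ lam).1‖ ^ 2 ≤
        (∑ i, (f ψ.1 (s i) + ψ.2 - G i) ^ 2) + lam * ‖ψ.1‖ ^ 2) :
    Gstar ≤ Filter.liminf (fun lam : ℝ => (φ lam).2) Filter.atTop := by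
  obtain ⟨i₀, -, hi₀⟩ := Finset.exists_mem_eq_sup' ⟨⟨0, hm⟩, Finset.mem_univ _⟩ G
  rw [← hGstar] at hi₀
  have hG : ∀ i, G i ≤ Gstar := fun i => hGstar ▸ Finset.le_sup' G (Finset.mem_univ i)
  have h0 : Feasible f s G ((0 : W), Gstar) := fun i => by simpa [hf_zero] using hG i
  set H := sqLoss f s G ((0 : W), Gstar)
  have hloss (lam : ℝ) (hlam : 0 ≤ lam) :
      sqLoss f s G (φ lam) + lam * ‖(φ lam).1‖ ^ 2 ≤ H :=
    sqLoss_add_mul_sq_norm_le (hmin lam hlam) h0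
  have hw : Tendsto (fun lam => (φ lam).1) atTop (𝓝 0) :=
    tendsto_zero_of_mul_sq_norm_le (H := H) <| (eventually_ge_atTop 0).mono fun lam hlam => by
      linarith [hloss lam hlam, sqLoss_nonneg f s G (φ lam)]
  have hg : Tendsto (fun lam => Gstar - f (φ lam).1 (s i₀)) atTop (𝓝 Gstar) := by
    simpa [hf_zero] using tendsto_const_nhds.sub (((hf_cont (s i₀)).tendsto 0).comp hw)
  refine le_liminf_of_tendsto_of_le_of_le_add hg (C := √H) ?_ ?_ <;>
    filter_upwards [eventually_ge_atTop 0] with lam hlam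
  · linarith [hfeas lam hlam i₀]
  · have hres := residual_le_sqrt_sqLoss f s G (φ lam) i₀
    have hsqrt : √(sqLoss f s G (φ lam)) ≤ √H := Real.sqrt_le_sqrt <| by
      linarith [hloss lam hlam, mul_nonneg hlam (sq_nonneg ‖(φ lam).1‖)]
    linarith

theorem stmt_5
    {W : Type*} [NormedAddCommGroup W] [NormedSpace ℝ W]
    {S : Type*}
    (f : W → S → ℝ)
    (hf_cont : ∀ s : S, Continuous fun w => f w s)
    (hf_zero : ∀ s : S, f 0 s = 0)
    (m : ℕ) (hm : 0 < m)
    (s : Fin m → S) (G : Fin m → ℝ)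
    (Gstar : ℝ)
    (hGstar : Gstar = Finset.univ.sup' ⟨⟨0, hm⟩, Finset.mem_univ _⟩ G)
    (φ : ℝ → W × ℝ)
    (hfeas : ∀ lam : ℝ, 0 ≤ lam → ∀ i : Fin m, G i ≤ f (φ lam).1 (s i) + (φ lam).2)
    (hmin : ∀ lam : ℝ, 0 ≤ lam → ∀ ψ : W × ℝ,
      (∀ i : Fin m, G i ≤ f ψ.1 (s i) + ψ.2) →
      (∑ i, (f (φ lam).1 (s i) + (φ lam).2 - G i) ^ 2) + lam * ‖(φ lam).1‖ ^ 2 ≤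
        (∑ i, (f ψ.1 (s i) + ψ.2 - G i) ^ 2) + lam * ‖ψ.1‖ ^ 2) :
    Gstar ≤ Filter.liminf (fun lam : ℝ => (φ lam).2) Filter.atTop :=
  stmt_5_general f hf_cont hf_zero m hm s G Gstar hGstar φ hfeas hmin
end

section
/- Suppose that for every λ ≥ 0, φ^λ = (w^λ, b^λ) is a λ-regularized upper envelope. Then limsup_{λ→∞} b^λ ≤ G*. -/
theorem stmt_6
    {W : Type*} [NormedAddCommGroup W] [NormedSpace ℝ W]
    {S : Type*}
    (f : W → S → ℝ)
    (hf_cont : ∀ s : S, Continuous fun w => f w s)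
    (hf_zero : ∀ s : S, f 0 s = 0)
    (m : ℕ) (hm : 0 < m)
    (s : Fin m → S) (G : Fin m → ℝ)
    (Gstar : ℝ)
    (hGstar : Gstar = Finset.univ.sup' ⟨⟨0, hm⟩, Finset.mem_univ _⟩ G)
    (φ : ℝ → W × ℝ)
    (hfeas : ∀ lam : ℝ, 0 ≤ lam → ∀ i : Fin m, G i ≤ f (φ lam).1 (s i) + (φ lam).2)
    (hmin : ∀ lam : ℝ, 0 ≤ lam → ∀ ψ : W × ℝ,
      (∀ i : Fin m, G i ≤ f ψ.1 (s i) + ψ.2) →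
      (∑ i, (f (φ lam).1 (s i) + (φ lam).2 - G i) ^ 2) + lam * ‖(φ lam).1‖ ^ 2 ≤
        (∑ i, (f ψ.1 (s i) + ψ.2 - G i) ^ 2) + lam * ‖ψ.1‖ ^ 2) :
    Filter.limsup (fun lam : ℝ => (φ lam).2) Filter.atTop ≤ Gstar := by
  have hGle : ∀ i, G i ≤ Gstar := by
    intro i; rw [hGstar]; exact Finset.le_sup' G (Finset.mem_univ i)
  set Hstar : ℝ := ∑ i, (Gstar - G i) ^ 2 with hHstar
  -- basic bound from minimality against ψ = (0, Gstar)
  have hbound : ∀ lam : ℝ, 0 ≤ lam →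
      (∑ i, (f (φ lam).1 (s i) + (φ lam).2 - G i) ^ 2) + lam * ‖(φ lam).1‖ ^ 2 ≤ Hstar := by
    intro lam hlam
    have hfeas0 : ∀ i : Fin m, G i ≤ f (0 : W) (s i) + Gstar := by
      intro i; rw [hf_zero]; simpa using hGle i
    have := hmin lam hlam (0, Gstar) hfeas0
    simpa [hf_zero, norm_zero, hHstar] using this
  have hsumnn : ∀ lam : ℝ, (0:ℝ) ≤ ∑ i, (f (φ lam).1 (s i) + (φ lam).2 - G i) ^ 2 :=
    fun lam => Finset.sum_nonneg fun i _ => sq_nonneg _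
  have hsumle : ∀ lam : ℝ, 0 ≤ lam →
      (∑ i, (f (φ lam).1 (s i) + (φ lam).2 - G i) ^ 2) ≤ Hstar := by
    intro lam hlam
    have := hbound lam hlam
    nlinarith [mul_nonneg hlam (sq_nonneg ‖(φ lam).1‖)]
  have hwnorm : ∀ lam : ℝ, 0 ≤ lam → lam * ‖(φ lam).1‖ ^ 2 ≤ Hstar := by
    intro lam hlam
    have := hbound lam hlam
    linarith [hsumnn lam]
  -- w^λ → 0
  have hw0 : Filter.Tendsto (fun lam => (φ lam).1) Filter.atTop (nhds 0) := by
    rw [tendsto_zero_iff_norm_tendsto_zero]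
    have hg : Filter.Tendsto (fun lam : ℝ => Real.sqrt (Hstar / lam)) Filter.atTop (nhds 0) := by
      have : Filter.Tendsto (fun lam : ℝ => Hstar / lam) Filter.atTop (nhds 0) :=
        tendsto_const_nhds.div_atTop Filter.tendsto_id
      simpa [Real.sqrt_zero, Function.comp_def] using (Real.continuous_sqrt.continuousAt.tendsto.comp this)
    apply squeeze_zero' (Filter.Eventually.of_forall fun lam => norm_nonneg _) _ hg
    filter_upwards [Filter.eventually_gt_atTop (0:ℝ)] with lam hlam
    have h1 : ‖(φ lam).1‖ ^ 2 ≤ Hstar / lam := by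
      rw [le_div_iff₀ hlam]; linarith [hwnorm lam hlam.le]
    calc ‖(φ lam).1‖ = Real.sqrt (‖(φ lam).1‖ ^ 2) := by
          rw [Real.sqrt_sq (norm_nonneg _)]
      _ ≤ Real.sqrt (Hstar / lam) := Real.sqrt_le_sqrt h1
  -- f (w^λ) (s i) → 0 for each i
  have hfi : ∀ i : Fin m, Filter.Tendsto (fun lam => f (φ lam).1 (s i)) Filter.atTop (nhds 0) := by
    intro i
    have := ((hf_cont (s i)).continuousAt (x := (0:W))).tendsto.comp hw0
    simpa [hf_zero, Function.comp_def] using this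
  -- eventual bound on b^λ
  have hev : ∀ ε : ℝ, 0 < ε → ∀ᶠ lam in Filter.atTop, (φ lam).2 ≤ Gstar + 2 * ε := by
    intro ε hε
    have hsmall : ∀ᶠ lam in Filter.atTop, ∀ i : Fin m, |f (φ lam).1 (s i)| < ε := by
      rw [Filter.eventually_all]
      intro i
      have := (hfi i).eventually (Metric.ball_mem_nhds (0:ℝ) hε)
      simpa [Real.dist_eq] using this
    filter_upwards [hsmall, Filter.eventually_ge_atTop (0:ℝ)] with lam hs hlam
    by_contra hb
    push_neg at hb
    have hlt : Hstar < ∑ i, (f (φ lam).1 (s i) + (φ lam).2 - G i) ^ 2 := by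
      rw [hHstar]
      apply Finset.sum_lt_sum_of_nonempty ⟨⟨0, hm⟩, Finset.mem_univ _⟩
      intro i _
      have h1 : |f (φ lam).1 (s i)| < ε := hs i
      have h2 : G i ≤ Gstar := hGle i
      have h3 : Gstar - G i < f (φ lam).1 (s i) + (φ lam).2 - G i := by
        have := abs_lt.mp h1
        linarith
      have h4 : 0 ≤ Gstar - G i := by linarith
      nlinarith
    exact absurd (hsumle lam hlam) (not_le.mpr hlt)
  -- coboundedness
  have hcobdd : Filter.IsCoboundedUnder (· ≤ ·) Filter.atTop (fun lam : ℝ => (φ lam).2) := by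
    apply Filter.isCoboundedUnder_le_of_eventually_le Filter.atTop (x := Gstar - 1)
    have hsmall : ∀ᶠ lam in Filter.atTop, ∀ i : Fin m, |f (φ lam).1 (s i)| < 1 := by
      rw [Filter.eventually_all]
      intro i
      have := (hfi i).eventually (Metric.ball_mem_nhds (0:ℝ) one_pos)
      simpa [Real.dist_eq] using this
    obtain ⟨i₀, _, hi₀⟩ := Finset.exists_mem_eq_sup' ⟨⟨0, hm⟩, Finset.mem_univ _⟩ G
    filter_upwards [hsmall, Filter.eventually_ge_atTop (0:ℝ)] with lam hs hlam
    have := hfeas lam hlam i₀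
    have := abs_lt.mp (hs i₀)
    have : Gstar = G i₀ := by rw [hGstar, hi₀]
    linarith [hfeas lam hlam i₀, (abs_lt.mp (hs i₀)).1, (abs_lt.mp (hs i₀)).2]
  -- conclude
  apply le_of_forall_pos_le_add
  intro ε hε
  have h2 : (0:ℝ) < ε / 2 := by linarith
  have := Filter.limsup_le_of_le hcobdd (hev (ε/2) h2)
  linarith [this]
end

section
/- Suppose that for every λ ≥ 0, φ^λ = (w^λ, b^λ) is a λ-regularized upper envelope. Then lim_{λ→∞} b^λ = G* and lim_{λ→∞} w^λ = 0 in W. -/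
theorem stmt_7
    {W : Type*} [NormedAddCommGroup W] [NormedSpace ℝ W]
    {S : Type*}
    (f : W → S → ℝ)
    (hf_cont : ∀ s : S, Continuous fun w => f w s)
    (hf_zero : ∀ s : S, f 0 s = 0)
    (m : ℕ) (hm : 0 < m)
    (s : Fin m → S) (G : Fin m → ℝ)
    (Gstar : ℝ)
    (hGstar : Gstar = Finset.univ.sup' ⟨⟨0, hm⟩, Finset.mem_univ _⟩ G)
    (φ : ℝ → W × ℝ)
    (hfeas : ∀ lam : ℝ, 0 ≤ lam → ∀ i : Fin m, G i ≤ f (φ lam).1 (s i) + (φ lam).2)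
    (hmin : ∀ lam : ℝ, 0 ≤ lam → ∀ ψ : W × ℝ,
      (∀ i : Fin m, G i ≤ f ψ.1 (s i) + ψ.2) →
      (∑ i, (f (φ lam).1 (s i) + (φ lam).2 - G i) ^ 2) + lam * ‖(φ lam).1‖ ^ 2 ≤
        (∑ i, (f ψ.1 (s i) + ψ.2 - G i) ^ 2) + lam * ‖ψ.1‖ ^ 2) :
    Filter.Tendsto (fun lam : ℝ => (φ lam).2) Filter.atTop (nhds Gstar)
    ∧ Filter.Tendsto (fun lam : ℝ => (φ lam).1) Filter.atTop (nhds 0) := by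
  have hne : (Finset.univ : Finset (Fin m)).Nonempty := ⟨⟨0, hm⟩, Finset.mem_univ _⟩
  set Hstar : ℝ := ∑ i, (Gstar - G i) ^ 2 with hHstar
  have hGle : ∀ i : Fin m, G i ≤ Gstar := by
    intro i; rw [hGstar]; exact Finset.le_sup' G (Finset.mem_univ i)
  -- the candidate (0, Gstar) is feasible
  have hcand : ∀ i : Fin m, G i ≤ f (0 : W) (s i) + Gstar := by
    intro i; rw [hf_zero]; simpa using hGle i
  -- key bound: lam * ‖w^lam‖² ≤ Hstar
  have hbound : ∀ lam : ℝ, 0 ≤ lam → lam * ‖(φ lam).1‖ ^ 2 ≤ Hstar := by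
    intro lam hlam
    have h := hmin lam hlam (0, Gstar) hcand
    simp only [hf_zero, norm_zero] at h
    have h1 : (0:ℝ) ≤ ∑ i, (f (φ lam).1 (s i) + (φ lam).2 - G i) ^ 2 :=
      Finset.sum_nonneg fun i _ => sq_nonneg _
    have h2 : (∑ i, ((0:ℝ) + Gstar - G i) ^ 2) + lam * (0:ℝ) ^ 2 = Hstar := by
      simp [hHstar]
    nlinarith [h]
  -- w^lam → 0
  have hw : Filter.Tendsto (fun lam : ℝ => (φ lam).1) Filter.atTop (nhds 0) := by
    apply squeeze_zero_norm' (a := fun lam : ℝ => Real.sqrt (Hstar / lam))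
      (f := fun lam => (φ lam).1)
    · filter_upwards [Filter.eventually_gt_atTop (0:ℝ)] with lam hlam
      have hb := hbound lam hlam.le
      have : ‖(φ lam).1‖ ^ 2 ≤ Hstar / lam := by
        rw [le_div_iff₀ hlam]; nlinarith
      calc ‖(φ lam).1‖ = Real.sqrt (‖(φ lam).1‖ ^ 2) := by
            rw [Real.sqrt_sq (norm_nonneg _)]
        _ ≤ Real.sqrt (Hstar / lam) := Real.sqrt_le_sqrt this
    · have h1 : Filter.Tendsto (fun lam : ℝ => Hstar / lam) Filter.atTop (nhds 0) :=
        tendsto_const_nhds.div_atTop Filter.tendsto_id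
      have h2 : Filter.Tendsto Real.sqrt (nhds 0) (nhds 0) := by
        simpa using Real.continuous_sqrt.tendsto 0
      exact h2.comp h1
  -- key identity: b^lam = sup'_i (G i - f (w^lam) (s i))
  have hkey : ∀ lam : ℝ, 0 ≤ lam →
      (φ lam).2 = Finset.univ.sup' hne (fun i => G i - f (φ lam).1 (s i)) := by
    intro lam hlam
    set w := (φ lam).1
    set b := (φ lam).2
    set bm := Finset.univ.sup' hne (fun i => G i - f w (s i)) with hbm
    have hble : bm ≤ b := by
      apply Finset.sup'_le
      intro i _
      have := hfeas lam hlam i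
      linarith
    have hfeasm : ∀ i : Fin m, G i ≤ f w (s i) + bm := by
      intro i
      have : G i - f w (s i) ≤ bm := Finset.le_sup' (fun j => G j - f w (s j)) (Finset.mem_univ i)
      linarith
    have h := hmin lam hlam (w, bm) hfeasm
    simp only at h
    have hsum : (∑ i, (f w (s i) + b - G i) ^ 2) ≤ ∑ i, (f w (s i) + bm - G i) ^ 2 := by
      linarith
    have hterm : ∀ i ∈ Finset.univ, (f w (s i) + bm - G i) ^ 2 ≤ (f w (s i) + b - G i) ^ 2 := by
      intro i _
      have h0 : 0 ≤ f w (s i) + bm - G i := by have := hfeasm i; linarith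
      nlinarith [hble]
    have heq : ∀ i ∈ Finset.univ, (f w (s i) + bm - G i) ^ 2 = (f w (s i) + b - G i) ^ 2 :=
      (Finset.sum_le_sum hterm).lt_or_eq.elim (fun h' => absurd hsum (not_le.mpr h'))
        (fun h' => by
          have := (Finset.sum_eq_sum_iff_of_le hterm).mp (le_antisymm (Finset.sum_le_sum hterm) hsum)
          intro i hi; exact this i hi)
    obtain ⟨i0, _, hi0⟩ := Finset.exists_mem_eq_sup' hne (fun i => G i - f w (s i))
    have hi0' : f w (s i0) + bm - G i0 = 0 := by rw [hbm, hi0]; ring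
    have := heq i0 (Finset.mem_univ i0)
    rw [hi0'] at this
    have hb0 : f w (s i0) + b - G i0 = b - bm := by rw [hbm, hi0]; ring
    rw [hb0] at this
    have : (b - bm) ^ 2 = 0 := by rw [← this]; ring
    have := pow_eq_zero_iff (n := 2) (by norm_num) |>.mp this
    linarith
  -- b^lam → Gstar
  have hb : Filter.Tendsto (fun lam : ℝ => (φ lam).2) Filter.atTop (nhds Gstar) := by
    have hGstar' : Gstar = Finset.univ.sup' hne (fun i => G i) := hGstar
    have hsup : Filter.Tendsto
        (fun lam : ℝ => Finset.univ.sup' hne (fun i => G i - f (φ lam).1 (s i)))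
        Filter.atTop (nhds Gstar) := by
      rw [hGstar']
      exact Filter.Tendsto.finset_sup'_nhds_apply hne (fun i _ => by
        have hfc : Filter.Tendsto (fun lam : ℝ => f (φ lam).1 (s i)) Filter.atTop (nhds 0) := by
          have := ((hf_cont (s i)).tendsto 0).comp hw
          simpa [hf_zero, Function.comp_def] using this
        simpa using (tendsto_const_nhds (x := G i)).sub hfc)
    apply hsup.congr'
    filter_upwards [Filter.eventually_ge_atTop (0:ℝ)] with lam hlam
    exact (hkey lam hlam).symm
  exact ⟨hb, hw⟩
end

section
/- For every d ≥ 1, m ≥ 1, any pairwise distinct points s_1, …, s_m ∈ ℝ^d, and any values G_1, …, G_m ∈ ℝ, there exist vectors w_1, …, w_m ∈ ℝ^d and real numbers a_1, …, a_m, c_1, …, c_m, b such that Σ_{j=1}^m a_j · max(0, ⟨w_j, s_i⟩ + c_j) + b = G_i for every i = 1, …, m. That is, a one-hidden-layer neural network with m ReLU activation units and a bias term at the output layer exactly interpolates the data {(s_i, G_i)}. -/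
/-!
Project the data onto a direction `w` on which the inner products `⟪w, s i⟫` are pairwise
distinct: such a `w` exists because a real vector space is not a finite union of the proper
hyperplanes `(s i - s j)ᗮ`. This reduces the problem to interpolation at distinct reals, which
is done by adding the points in increasing order: a unit `max 0 (x - t)` whose kink `t` lies
between the previous points and the new one is zero on the former and can be scaled to fix the
value at the latter.
-/

open Function
open scoped InnerProductSpace

theorem exists_inner_injective {ι E : Type*} [Finite ι] [NormedAddCommGroup E]
    [InnerProductSpace ℝ E] {s : ι → E} (hs : Injective s) :
    ∃ w : E, Injective fun i => ⟪w, s i⟫_ℝ := by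
  by_contra! h
  let p : {q : ι × ι // q.1 ≠ q.2} → Submodule ℝ E := fun q => (ℝ ∙ (s q.1.1 - s q.1.2))ᗮ
  have hcover : ⋃ q, (p q : Set E) = Set.univ := by
    refine Set.eq_univ_of_forall fun w => ?_
    obtain ⟨i, j, hij, hne⟩ := not_injective_iff.mp (h w)
    refine Set.mem_iUnion.mpr ⟨⟨(i, j), hne⟩, ?_⟩
    rw [SetLike.mem_coe, Submodule.mem_orthogonal_singleton_iff_inner_left, inner_sub_right, hij,
      sub_self]
  obtain ⟨⟨⟨i, j⟩, hne⟩, htop⟩ := Subspace.exists_eq_top_of_iUnion_eq_univ hcover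
  simp only [p, Submodule.orthogonal_eq_top_iff, Submodule.span_singleton_eq_bot,
    sub_eq_zero] at htop
  exact hne (hs htop)

theorem exists_relu_interpolation {ι : Type*} [DecidableEq ι] {x : ι → ℝ} (hx : Injective x)
    (g : ι → ℝ) (s : Finset ι) :
    ∃ (a c : ι → ℝ) (b : ℝ), ∀ i ∈ s, ∑ j ∈ s, a j * max 0 (x i + c j) + b = g i := by
  induction s using Finset.induction_on_max_value x with
  | empty => exact ⟨0, 0, 0, by simp⟩
  | insert k s hk hle ih =>
    obtain ⟨a, c, b, hab⟩ := ih
    obtain ⟨t, hst, htk⟩ : ∃ t, (∀ j ∈ s, x j ≤ t) ∧ t < x k := by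
      rcases s.eq_empty_or_nonempty with rfl | hne
      · exact ⟨x k - 1, by simp, by linarith⟩
      · obtain ⟨j₀, hj₀, hmax⟩ := s.exists_max_image x hne
        exact ⟨x j₀, hmax, (hle j₀ hj₀).lt_of_ne (hx.ne (ne_of_mem_of_not_mem hj₀ hk))⟩
    set r := g k - (∑ j ∈ s, a j * max 0 (x k + c j) + b)
    refine ⟨update a k (r / (x k - t)), update c k (-t), b, ?_⟩
    have hsum : ∀ i, ∑ j ∈ insert k s,
        update a k (r / (x k - t)) j * max 0 (x i + update c k (-t) j) =
          r / (x k - t) * max 0 (x i - t) + ∑ j ∈ s, a j * max 0 (x i + c j) := by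
      intro i
      rw [Finset.sum_insert hk, update_self, update_self, ← sub_eq_add_neg]
      congr 1
      refine Finset.sum_congr rfl fun j hj => ?_
      rw [update_of_ne (ne_of_mem_of_not_mem hj hk), update_of_ne (ne_of_mem_of_not_mem hj hk)]
    intro i hi
    rw [hsum]
    rcases Finset.mem_insert.mp hi with rfl | his
    · rw [max_eq_right (sub_pos.mpr htk).le, div_mul_cancel₀ _ (sub_pos.mpr htk).ne']
      ring
    · rw [max_eq_left (sub_nonpos.mpr (hst i his)), mul_zero, zero_add, hab i his]

theorem stmt_9_general
    (d m : ℕ)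
    (s : Fin m → EuclideanSpace ℝ (Fin d))
    (hs : ∀ i j : Fin m, i ≠ j → s i ≠ s j)
    (G : Fin m → ℝ) :
    ∃ (w : Fin m → EuclideanSpace ℝ (Fin d)) (a c : Fin m → ℝ) (b : ℝ),
      ∀ i : Fin m,
        (∑ j, a j * max 0 (inner ℝ (w j) (s i) + c j)) + b = G i := by
  obtain ⟨w, hw⟩ := exists_inner_injective fun i j hij => by_contra fun hne => hs i j hne hij
  obtain ⟨a, c, b, h⟩ := exists_relu_interpolation hw G Finset.univ
  exact ⟨fun _ => w, a, c, b, fun i => h i (Finset.mem_univ i)⟩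

theorem stmt_9
    (d m : ℕ) (hd : 0 < d) (hm : 0 < m)
    (s : Fin m → EuclideanSpace ℝ (Fin d))
    (hs : ∀ i j : Fin m, i ≠ j → s i ≠ s j)
    (G : Fin m → ℝ) :
    ∃ (w : Fin m → EuclideanSpace ℝ (Fin d)) (a c : Fin m → ℝ) (b : ℝ),
      ∀ i : Fin m,
        (∑ j, a j * max 0 (inner ℝ (w j) (s i) + c j)) + b = G i :=
  stmt_9_general d m s hs G
end

section
/- Fix λ ≥ 0. Let (K_n) be a sequence of reals with K_n ≥ 1 and K_n → ∞, and suppose for each n that φ_n ∈ W × ℝ minimizes the penalty loss L^{K_n}(φ) = J^λ(φ) + (K_n − 1) · Σ_{i=1}^m max(0, G_i − V_φ(s_i))² over all of W × ℝ. If φ* is a cluster point of the sequence (φ_n) in W × ℝ, then φ* is a λ-regularized upper envelope: φ* is feasible (V_{φ*}(s_i) ≥ G_i for all i) and J^λ(φ*) ≤ J^λ(ψ) for every feasible ψ ∈ W × ℝ. -/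
/-!
Write `J` for the regularized loss and `P` for the squared constraint violation, so that the
penalty loss is `J + (K n - 1) • P` and the feasible set is `{P = 0}`. Minimality against a
feasible `ψ` gives `J (φ n) + (K n - 1) * P (φ n) ≤ J ψ`, hence eventually
`J (φ n) + M * P (φ n) ≤ J ψ` for every fixed `M`. The left side is continuous, so the
inequality passes to the cluster point `φ*`: with `M = 0` this is optimality, and letting
`M → ∞` forces `P φ* = 0`, i.e. feasibility.
-/

open Filter Topology

section PenaltyMethod

variable {X ι : Type*} [TopologicalSpace X] {J P : X → ℝ} {l : Filter ι} {c : ι → ℝ}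
  {φ : ι → X} {x ψ : X}

theorem penalty_clusterPt_add_mul_le (hJ : Continuous J) (hP : Continuous P)
    (hP_nonneg : ∀ y, 0 ≤ P y) (hc : Tendsto c l atTop)
    (hmin : ∀ i y, J (φ i) + c i * P (φ i) ≤ J y + c i * P y)
    (hx : MapClusterPt x l φ) (hψ : P ψ = 0) (M : ℝ) :
    J x + M * P x ≤ J ψ := by
  refine (isClosed_le (hJ.add (continuous_const.mul hP)) continuous_const).mem_of_mapClusterPt
    hx ?_
  filter_upwards [hc.eventually_ge_atTop M] with i hi
  calc J (φ i) + M * P (φ i) ≤ J (φ i) + c i * P (φ i) := by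
        gcongr
        exact hP_nonneg _
    _ ≤ J ψ := by simpa [hψ] using hmin i ψ

theorem eq_zero_of_forall_add_mul_le {a b d : ℝ} (hb : 0 ≤ b)
    (h : ∀ M : ℝ, a + M * b ≤ d) : b = 0 := by
  by_contra hne
  have hb_pos : 0 < b := lt_of_le_of_ne hb (Ne.symm hne)
  have := h ((|d - a| + 1) / b)
  rw [div_mul_cancel₀ _ hb_pos.ne'] at this
  linarith [le_abs_self (d - a)]

theorem penalty_clusterPt_eq_zero (hJ : Continuous J) (hP : Continuous P)
    (hP_nonneg : ∀ y, 0 ≤ P y) (hc : Tendsto c l atTop)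
    (hmin : ∀ i y, J (φ i) + c i * P (φ i) ≤ J y + c i * P y)
    (hx : MapClusterPt x l φ) (hψ : P ψ = 0) : P x = 0 :=
  eq_zero_of_forall_add_mul_le (hP_nonneg x)
    (penalty_clusterPt_add_mul_le hJ hP hP_nonneg hc hmin hx hψ)

theorem penalty_clusterPt_le (hJ : Continuous J) (hP : Continuous P)
    (hP_nonneg : ∀ y, 0 ≤ P y) (hc : Tendsto c l atTop)
    (hmin : ∀ i y, J (φ i) + c i * P (φ i) ≤ J y + c i * P y)
    (hx : MapClusterPt x l φ) (hψ : P ψ = 0) : J x ≤ J ψ := by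
  simpa using penalty_clusterPt_add_mul_le hJ hP hP_nonneg hc hmin hx hψ 0

end PenaltyMethod

section UpperEnvelope

variable {W S ι : Type*} [Fintype ι] (f : W → S → ℝ) (s : ι → S) (G : ι → ℝ)

def envelopeLoss [Norm W] (lam : ℝ) (φ : W × ℝ) : ℝ :=
  (∑ i, (f φ.1 (s i) + φ.2 - G i) ^ 2) + lam * ‖φ.1‖ ^ 2

def envelopeViolation (φ : W × ℝ) : ℝ :=
  ∑ i, max 0 (G i - (f φ.1 (s i) + φ.2)) ^ 2

variable {f}

theorem continuous_envelopeLoss [SeminormedAddGroup W] (hf : ∀ s, Continuous fun w ↦ f w s)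
    (lam : ℝ) : Continuous (envelopeLoss f s G lam) := by
  unfold envelopeLoss
  fun_prop

theorem continuous_envelopeViolation [TopologicalSpace W] (hf : ∀ s, Continuous fun w ↦ f w s) :
    Continuous (envelopeViolation f s G) := by
  unfold envelopeViolation
  fun_prop

theorem envelopeViolation_nonneg (φ : W × ℝ) : 0 ≤ envelopeViolation f s G φ :=
  Finset.sum_nonneg fun _ _ ↦ sq_nonneg _

theorem envelopeViolation_eq_zero_iff {φ : W × ℝ} :
    envelopeViolation f s G φ = 0 ↔ ∀ i, G i ≤ f φ.1 (s i) + φ.2 := by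
  simp only [envelopeViolation, Finset.sum_eq_zero_iff_of_nonneg fun _ _ ↦ sq_nonneg _,
    Finset.mem_univ, true_implies, sq_eq_zero_iff, max_eq_left_iff, sub_nonpos]

theorem exists_envelopeViolation_eq_zero [Zero W] :
    ∃ φ : W × ℝ, envelopeViolation f s G φ = 0 := by
  obtain ⟨b, hb⟩ := Finite.bddAbove_range fun i ↦ G i - f 0 (s i)
  refine ⟨(0, b), (envelopeViolation_eq_zero_iff s G).2 fun i ↦ ?_⟩
  have := hb ⟨i, rfl⟩
  simp only at this ⊢
  linarith

end UpperEnvelope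

theorem stmt_12_general
    {W : Type*} [NormedAddCommGroup W] [NormedSpace ℝ W]
    {S : Type*}
    (f : W → S → ℝ)
    (hf_cont : ∀ s : S, Continuous fun w => f w s)
    (m : ℕ)
    (s : Fin m → S) (G : Fin m → ℝ)
    (lam : ℝ)
    (K : ℕ → ℝ)
    (hK_tendsto : Filter.Tendsto K Filter.atTop Filter.atTop)
    (φ : ℕ → W × ℝ)
    (hmin : ∀ n : ℕ, ∀ ψ : W × ℝ,
      ((∑ i, (f (φ n).1 (s i) + (φ n).2 - G i) ^ 2) + lam * ‖(φ n).1‖ ^ 2)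
        + (K n - 1) * ∑ i, max 0 (G i - (f (φ n).1 (s i) + (φ n).2)) ^ 2 ≤
      ((∑ i, (f ψ.1 (s i) + ψ.2 - G i) ^ 2) + lam * ‖ψ.1‖ ^ 2)
        + (K n - 1) * ∑ i, max 0 (G i - (f ψ.1 (s i) + ψ.2)) ^ 2)
    (φstar : W × ℝ)
    (hcluster : MapClusterPt φstar Filter.atTop φ) :
    (∀ i : Fin m, G i ≤ f φstar.1 (s i) + φstar.2)
    ∧ ∀ ψ : W × ℝ, (∀ i : Fin m, G i ≤ f ψ.1 (s i) + ψ.2) →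
        (∑ i, (f φstar.1 (s i) + φstar.2 - G i) ^ 2) + lam * ‖φstar.1‖ ^ 2 ≤
          (∑ i, (f ψ.1 (s i) + ψ.2 - G i) ^ 2) + lam * ‖ψ.1‖ ^ 2 := by
  have hJ := continuous_envelopeLoss s G hf_cont lam
  have hP := continuous_envelopeViolation s G hf_cont
  have hc : Tendsto (fun n ↦ K n - 1) atTop atTop := tendsto_atTop_add_const_right _ _ hK_tendsto
  obtain ⟨ψ₀, hψ₀⟩ := exists_envelopeViolation_eq_zero (f := f) s G
  refine ⟨(envelopeViolation_eq_zero_iff s G).1 ?_, fun ψ hψ ↦ ?_⟩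
  · exact penalty_clusterPt_eq_zero hJ hP (envelopeViolation_nonneg s G) hc hmin hcluster hψ₀
  · exact penalty_clusterPt_le hJ hP (envelopeViolation_nonneg s G) hc hmin hcluster
      ((envelopeViolation_eq_zero_iff s G).2 hψ)

theorem stmt_12
    {W : Type*} [NormedAddCommGroup W] [NormedSpace ℝ W]
    {S : Type*}
    (f : W → S → ℝ)
    (hf_cont : ∀ s : S, Continuous fun w => f w s)
    (hf_zero : ∀ s : S, f 0 s = 0)
    (m : ℕ) (hm : 0 < m)
    (s : Fin m → S) (G : Fin m → ℝ)
    (lam : ℝ) (hlam : 0 ≤ lam)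
    (K : ℕ → ℝ)
    (hK_one : ∀ n : ℕ, 1 ≤ K n)
    (hK_tendsto : Filter.Tendsto K Filter.atTop Filter.atTop)
    (φ : ℕ → W × ℝ)
    (hmin : ∀ n : ℕ, ∀ ψ : W × ℝ,
      ((∑ i, (f (φ n).1 (s i) + (φ n).2 - G i) ^ 2) + lam * ‖(φ n).1‖ ^ 2)
        + (K n - 1) * ∑ i, max 0 (G i - (f (φ n).1 (s i) + (φ n).2)) ^ 2 ≤
      ((∑ i, (f ψ.1 (s i) + ψ.2 - G i) ^ 2) + lam * ‖ψ.1‖ ^ 2)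
        + (K n - 1) * ∑ i, max 0 (G i - (f ψ.1 (s i) + ψ.2)) ^ 2)
    (φstar : W × ℝ)
    (hcluster : MapClusterPt φstar Filter.atTop φ) :
    (∀ i : Fin m, G i ≤ f φstar.1 (s i) + φstar.2)
    ∧ ∀ ψ : W × ℝ, (∀ i : Fin m, G i ≤ f ψ.1 (s i) + ψ.2) →
        (∑ i, (f φstar.1 (s i) + φstar.2 - G i) ^ 2) + lam * ‖φstar.1‖ ^ 2 ≤
          (∑ i, (f ψ.1 (s i) + ψ.2 - G i) ^ 2) + lam * ‖ψ.1‖ ^ 2 :=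
  stmt_12_general f hf_cont m s G lam K hK_tendsto φ hmin φstar hcluster
end
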